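/- arXiv:2503.23703 — 5 statements merged into one kernel-verified Lean document; each statement's English description precedes it below -/
import Mathlib

section
/- Any minimal (with respect to inclusion) tropical solution S ⊆ ℤ≥0 of a tropical linear differential equation P = min_{0≤i≤k}{a_i + u^(i)} has at most two elements. -/
/-- `tval S i` = min { s - i : s ∈ S, s ≥ i }, as an extended real (⊤ if no such s). -/
noncomputable def tval (S : Set ℕ) (i : ℕ) : EReal :=
  ⨅ (d : ℕ) (_ : i + d ∈ S), ((d : ℝ) : EReal)

/-- The term `a_i + val_S(i)` of the tropical linear differential equation. -/
noncomputable def tterm (a : ℕ → ℤ) (S : Set ℕ) (i : ℕ) : EReal :=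
  ((a i : ℝ) : EReal) + tval S i

/-- `min_{0 ≤ i ≤ k} { a_i + val_S(i) }`. -/
noncomputable def tmin (k : ℕ) (a : ℕ → ℤ) (S : Set ℕ) : EReal :=
  ⨅ i ∈ Finset.range (k + 1), tterm a S i

/-- `S` is a tropical solution: the minimum is attained at least twice
(this also covers the case where the minimum is `∞`, since `k ≥ 1`). -/
def IsSol (k : ℕ) (a : ℕ → ℤ) (S : Set ℕ) : Prop :=
  ∃ i ∈ Finset.range (k + 1), ∃ j ∈ Finset.range (k + 1),
    i ≠ j ∧ tterm a S i = tmin k a S ∧ tterm a S j = tmin k a S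

/-- A minimal tropical solution: nonempty, a solution, and no nonempty proper
subset is a solution. -/
def IsMinSol (k : ℕ) (a : ℕ → ℤ) (S : Set ℕ) : Prop :=
  S.Nonempty ∧ IsSol k a S ∧ ∀ T ⊆ S, T.Nonempty → IsSol k a T → T = S

/-!
Only the elements of `S` realising `val_S(i)` and `val_S(j)`, for two indices `i ≠ j` at which
the minimum is attained, matter: the pair `T` of these two elements has `val_T(i) = val_S(i)`,
`val_T(j) = val_S(j)` and `val_T ≥ val_S` everywhere, so the minimum is still attained at `i` and
`j`. Hence `T` is a solution, and minimality forces `S = T`.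
-/

section TropicalSolution

variable {k : ℕ} {a : ℕ → ℤ} {S T : Set ℕ} {i : ℕ}

lemma tval_le {d : ℕ} (h : i + d ∈ S) : tval S i ≤ ((d : ℝ) : EReal) :=
  iInf₂_le d h

lemma tval_anti (hTS : T ⊆ S) (i : ℕ) : tval S i ≤ tval T i :=
  le_iInf₂ fun _ hd => tval_le (hTS hd)

lemma tterm_anti (hTS : T ⊆ S) (i : ℕ) : tterm a S i ≤ tterm a T i :=
  add_le_add le_rfl (tval_anti hTS i)

lemma tmin_anti (hTS : T ⊆ S) : tmin k a S ≤ tmin k a T :=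
  iInf₂_mono fun i _ => tterm_anti hTS i

lemma tval_ne_top_of_tterm_ne_top (h : tterm a S i ≠ ⊤) : tval S i ≠ ⊤ := by
  rintro hval
  exact h (by rw [tterm, hval, EReal.coe_add_top])

lemma tmin_ne_top_of_nonempty (hS : S.Nonempty) : tmin k a S ≠ ⊤ := by
  obtain ⟨s, hs⟩ := hS
  refine ne_top_of_le_ne_top (EReal.coe_ne_top ((a 0 : ℝ) + s)) ?_
  calc tmin k a S ≤ tterm a S 0 := iInf₂_le 0 (by simp)
    _ ≤ ((a 0 : ℝ) : EReal) + ((s : ℝ) : EReal) :=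
        add_le_add le_rfl (tval_le (by simpa using hs))
    _ = (((a 0 : ℝ) + s : ℝ) : EReal) := (EReal.coe_add _ _).symm

lemma exists_mem_tval_singleton_eq (h : tval S i ≠ ⊤) : ∃ s ∈ S, tval {s} i = tval S i := by
  classical
  have hex : ∃ d, i + d ∈ S := by
    by_contra! hnone
    exact h (by simp [tval, hnone])
  have hmem : i + Nat.find hex ∈ S := Nat.find_spec hex
  refine ⟨_, hmem, le_antisymm ?_ (tval_anti (Set.singleton_subset_iff.mpr hmem) i)⟩
  calc tval {i + Nat.find hex} i ≤ ((Nat.find hex : ℝ) : EReal) := tval_le rfl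
    _ ≤ tval S i := le_iInf₂ fun d hd => by exact_mod_cast Nat.find_min' hex hd

lemma tterm_eq_of_tval_le (hTS : T ⊆ S) (h : tval T i ≤ tval S i) :
    tterm a T i = tterm a S i := by
  rw [tterm, tterm, le_antisymm h (tval_anti hTS i)]

lemma isSol_of_subset {j : ℕ} (hTS : T ⊆ S) (hi : i ∈ Finset.range (k + 1))
    (hj : j ∈ Finset.range (k + 1)) (hij : i ≠ j) (hSi : tterm a S i = tmin k a S)
    (hSj : tterm a S j = tmin k a S) (hTi : tterm a T i = tterm a S i)
    (hTj : tterm a T j = tterm a S j) : IsSol k a T := by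
  have hmin : tmin k a T = tmin k a S :=
    le_antisymm ((iInf₂_le i hi).trans (hTi.trans hSi).le) (tmin_anti hTS)
  exact ⟨i, hi, j, hj, hij, by rw [hTi, hSi, hmin], by rw [hTj, hSj, hmin]⟩

end TropicalSolution

theorem stmt0_general (k : ℕ) (a : ℕ → ℤ) (S : Set ℕ)
    (h : IsMinSol k a S) : ∃ p q : ℕ, S ⊆ {p, q} := by
  obtain ⟨hS, ⟨i, hi, j, hj, hij, hSi, hSj⟩, hminimal⟩ := h
  have hfin : tmin k a S ≠ ⊤ := tmin_ne_top_of_nonempty hS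
  obtain ⟨p, hp, hpi⟩ :=
    exists_mem_tval_singleton_eq (tval_ne_top_of_tterm_ne_top (a := a) (hSi ▸ hfin))
  obtain ⟨q, hq, hqj⟩ :=
    exists_mem_tval_singleton_eq (tval_ne_top_of_tterm_ne_top (a := a) (hSj ▸ hfin))
  have hpq : ({p, q} : Set ℕ) ⊆ S := Set.insert_subset hp (Set.singleton_subset_iff.mpr hq)
  have hsol : IsSol k a {p, q} := isSol_of_subset hpq hi hj hij hSi hSj
    (tterm_eq_of_tval_le hpq ((tval_anti (by simp) i).trans hpi.le))
    (tterm_eq_of_tval_le hpq ((tval_anti (by simp) j).trans hqj.le))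
  exact ⟨p, q, (hminimal {p, q} hpq (Set.insert_nonempty p {q}) hsol).ge⟩

/-- any minimal tropical solution has at most two elements. -/
theorem stmt0 (k : ℕ) (hk : 1 ≤ k) (a : ℕ → ℤ) (S : Set ℕ)
    (h : IsMinSol k a S) : ∃ p q : ℕ, S ⊆ {p, q} :=
  stmt0_general k a S h
end

section
/- If S is a minimal tropical solution of P = min_{0≤i≤k}{a_i + u^(i)} of the form S = {p, q} with p < q, then p < k. -/
lemma tval_eq_of_le_of_forall_le {S : Set ℕ} {p i : ℕ} (hp : p ∈ S) (hi : i ≤ p)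
    (hleast : ∀ s ∈ S, i ≤ s → p ≤ s) : tval S i = ((p - i : ℕ) : ℝ) := by
  apply le_antisymm
  · exact iInf₂_le (p - i) (by rwa [Nat.add_sub_cancel' hi])
  · refine le_iInf₂ fun d hd => ?_
    have : p - i ≤ d := by have := hleast (i + d) hd (Nat.le_add_right i d); omega
    exact_mod_cast this

lemma tmin_congr {k : ℕ} {a : ℕ → ℤ} {S T : Set ℕ}
    (h : ∀ i ∈ Finset.range (k + 1), tterm a S i = tterm a T i) : tmin k a S = tmin k a T :=
  iInf_congr fun i => iInf_congr (h i)

lemma IsSol.congr {k : ℕ} {a : ℕ → ℤ} {S T : Set ℕ}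
    (h : ∀ i ∈ Finset.range (k + 1), tterm a S i = tterm a T i) (hS : IsSol k a S) :
    IsSol k a T := by
  obtain ⟨i, hi, j, hj, hij, hiS, hjS⟩ := hS
  refine ⟨i, hi, j, hj, hij, ?_, ?_⟩ <;> rw [← tmin_congr h, ← h _ ‹_›] <;> assumption

lemma tterm_pair_eq_tterm_singleton (a : ℕ → ℤ) {p q i : ℕ} (hpq : p < q) (hi : i ≤ p) :
    tterm a {p, q} i = tterm a {p} i := by
  have hpair : tval {p, q} i = ((p - i : ℕ) : ℝ) :=
    tval_eq_of_le_of_forall_le (by simp) hi (by rintro s (rfl | rfl) - <;> omega)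
  have hsingle : tval {p} i = ((p - i : ℕ) : ℝ) :=
    tval_eq_of_le_of_forall_le rfl hi (by rintro s rfl -; rfl)
  rw [tterm, tterm, hpair, hsingle]

/- If `k ≤ p`, every `val_{p,q}(i)` with `i ≤ k` only sees `p`, so `{p}` is already a solution. -/
theorem stmt1_general (k : ℕ) (a : ℕ → ℤ) (p q : ℕ) (hpq : p < q)
    (h : IsMinSol k a {p, q}) : p < k := by
  obtain ⟨-, hsol, hmin⟩ := h
  by_contra! hpk
  have hterm : ∀ i ∈ Finset.range (k + 1), tterm a {p, q} i = tterm a {p} i := fun i hi =>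
    tterm_pair_eq_tterm_singleton a hpq (by simp at hi; omega)
  have hsingle : ({p} : Set ℕ) = {p, q} :=
    hmin {p} (by simp) (Set.singleton_nonempty p) (hsol.congr hterm)
  have hq : q ∈ ({p} : Set ℕ) := hsingle ▸ Set.mem_insert_of_mem p rfl
  exact hpq.ne' hq

/-- if `{p, q}` with `p < q` is a minimal tropical solution, then `p < k`. -/
theorem stmt1 (k : ℕ) (hk : 1 ≤ k) (a : ℕ → ℤ) (p q : ℕ) (hpq : p < q)
    (h : IsMinSol k a {p, q}) : p < k :=
  stmt1_general k a p q hpq h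
end

section
/- If {p, q_1} and {p, q_2} are both minimal tropical solutions of P = min_{0≤i≤k}{a_i + u^(i)} with p < k and q_1, q_2 ≥ k, then q_1 = q_2. -/
section MinTwiceOn

variable {α β γ : Type*}

def MinTwiceOn [Preorder β] (f : α → β) (s : Set α) : Prop :=
  ∃ i ∈ s, ∃ j ∈ s, i ≠ j ∧ IsMinOn f s i ∧ IsMinOn f s j

theorem minTwiceOn_comp_iff [LinearOrder β] [Preorder γ] {f : α → β} {g : β → γ} {s : Set α}
    (hg : StrictMono g) : MinTwiceOn (g ∘ f) s ↔ MinTwiceOn f s := by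
  have hmin : ∀ i, IsMinOn (g ∘ f) s i ↔ IsMinOn f s i := fun i => by
    simp only [isMinOn_iff, Function.comp_apply, hg.le_iff_le]
  simp only [MinTwiceOn, hmin]

theorem MinTwiceOn.congr [Preorder β] {f g : α → β} {s : Set α} (h : MinTwiceOn f s)
    (hfg : s.EqOn f g) : MinTwiceOn g s := by
  have hmin : ∀ i ∈ s, IsMinOn f s i → IsMinOn g s i := fun i hi hf => by
    rw [isMinOn_iff] at hf ⊢
    intro x hx
    rw [← hfg hi, ← hfg hx]
    exact hf x hx
  obtain ⟨i, hi, j, hj, hij, hmi, hmj⟩ := h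
  exact ⟨i, hi, j, hj, hij, hmin i hi hmi, hmin j hj hmj⟩

theorem MinTwiceOn.of_subset_of_eq_top [Preorder β] [OrderTop β] {f : α → β} {s t : Set α}
    (h : MinTwiceOn f t) (hts : t ⊆ s) (htop : ∀ x ∈ s \ t, f x = ⊤) : MinTwiceOn f s := by
  have hmin : ∀ i, IsMinOn f t i → IsMinOn f s i := fun i hi => by
    rw [isMinOn_iff] at hi ⊢
    intro x hx
    by_cases hxt : x ∈ t
    · exact hi x hxt
    · rw [htop x ⟨hx, hxt⟩]
      exact le_top
  obtain ⟨i, hi, j, hj, hij, hmi, hmj⟩ := h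
  exact ⟨i, hts hi, j, hts hj, hij, hmin i hmi, hmin j hmj⟩

theorem IsMinOn.finset_inf'_eq [LinearOrder β] {f : α → β} {s : Finset α} {i : α}
    (h : IsMinOn f s i) (hi : i ∈ s) (hs : s.Nonempty) : s.inf' hs f = f i :=
  le_antisymm (Finset.inf'_le f hi) (Finset.le_inf' hs f fun l hl => isMinOn_iff.1 h l hl)

theorem add_inf'_eq_add_inf'_of_isMinOn {B : ℕ → ℤ} {p k u v : ℕ} {c₁ c₂ : ℤ} (hu : u ≤ p)
    (hpv : p < v) (hvk : v ≤ k) (hmu : IsMinOn B (Set.Iic p) u) (hmv : IsMinOn B (Set.Ioc p k) v)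
    (huv : B u + c₁ = B v + c₂) :
    c₂ + (Finset.Ioc p k).inf' (Finset.nonempty_Ioc.2 (hpv.trans_le hvk)) B
      = c₁ + (Finset.Iic p).inf' Finset.nonempty_Iic B := by
  rw [← Finset.coe_Iic] at hmu
  rw [← Finset.coe_Ioc] at hmv
  rw [hmu.finset_inf'_eq (Finset.mem_Iic.2 hu), hmv.finset_inf'_eq (Finset.mem_Ioc.2 ⟨hpv, hvk⟩)]
  omega

theorem MinTwiceOn.add_inf'_eq_add_inf' {B : ℕ → ℤ} {p k : ℕ} {c₁ c₂ : ℤ} (hp : p < k)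
    (hc : c₁ ≤ c₂) (hG : MinTwiceOn (fun l => B l + if l ≤ p then c₁ else c₂) (Set.Iic k))
    (hlow : ¬ MinTwiceOn B (Set.Iic p)) (hall : ¬ MinTwiceOn B (Set.Iic k)) :
    c₂ + (Finset.Ioc p k).inf' (Finset.nonempty_Ioc.2 hp) B
      = c₁ + (Finset.Iic p).inf' Finset.nonempty_Iic B := by
  set G : ℕ → ℤ := fun l => B l + if l ≤ p then c₁ else c₂
  have hG_low : ∀ l ≤ p, G l = B l + c₁ := fun l hl => by simp only [G, if_pos hl]
  have hG_high : ∀ l, p < l → G l = B l + c₂ := fun l hl => by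
    simp only [G, if_neg (not_le.2 hl)]
  have hG_le : ∀ l, G l ≤ B l + c₂ := fun l => by
    rcases le_or_gt l p with hl | hl
    · rw [hG_low l hl]; omega
    · rw [hG_high l hl]
  have low_min : ∀ u ≤ p, IsMinOn G (Set.Iic k) u → IsMinOn B (Set.Iic p) u :=
    fun u hu hmin => isMinOn_iff.2 fun l (hl : l ≤ p) => by
      have := isMinOn_iff.1 hmin l (show l ≤ k by omega)
      rw [hG_low u hu, hG_low l hl] at this
      omega
  have high_min : ∀ v, p < v → IsMinOn G (Set.Iic k) v → IsMinOn B (Set.Iic k) v :=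
    fun v hv hmin => isMinOn_iff.2 fun l hl => by
      have h₁ := isMinOn_iff.1 hmin l hl
      have h₂ := hG_le l
      rw [hG_high v hv] at h₁
      omega
  have straddle : ∀ u v, u ≤ p → p < v → v ≤ k →
      IsMinOn G (Set.Iic k) u → IsMinOn G (Set.Iic k) v →
      c₂ + (Finset.Ioc p k).inf' (Finset.nonempty_Ioc.2 hp) B
        = c₁ + (Finset.Iic p).inf' Finset.nonempty_Iic B := by
    intro u v hu hpv hvk hmu hmv
    refine add_inf'_eq_add_inf'_of_isMinOn hu hpv hvk (low_min u hu hmu)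
      ((high_min v hpv hmv).on_subset Set.Ioc_subset_Iic_self) ?_
    rw [← hG_low u hu, ← hG_high v hpv]
    exact le_antisymm (isMinOn_iff.1 hmu v hvk) (isMinOn_iff.1 hmv u (by omega : u ≤ k))
  obtain ⟨i, hi, j, hj, hij, hmi, hmj⟩ := hG
  rcases le_or_gt i p with hip | hip <;> rcases le_or_gt j p with hjp | hjp
  · exact absurd ⟨i, hip, j, hjp, hij, low_min i hip hmi, low_min j hjp hmj⟩ hlow
  · exact straddle i j hip hjp hj hmi hmj
  · exact straddle j i hjp hip hi hmj hmi
  · exact absurd ⟨i, hi, j, hj, hij, high_min i hip hmi, high_min j hjp hmj⟩ hall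

end MinTwiceOn

section Tropical

variable {k : ℕ} {a : ℕ → ℤ} {S : Set ℕ}

theorem tval_eq {i s : ℕ} (hs : s ∈ S) (his : i ≤ s) (hmin : ∀ t ∈ S, i ≤ t → s ≤ t) :
    tval S i = (((s - i : ℕ) : ℝ) : EReal) := by
  refine le_antisymm (iInf₂_le (s - i) ?_) (le_iInf₂ fun d hd => ?_)
  · rwa [Nat.add_sub_cancel' his]
  · have := hmin _ hd (Nat.le_add_right _ _)
    exact EReal.coe_le_coe_iff.2 (Nat.cast_le.2 (by omega))

theorem tval_eq_top {i : ℕ} (h : ∀ t ∈ S, t < i) : tval S i = ⊤ :=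
  eq_top_iff.2 (le_iInf₂ fun d hd => absurd (h _ hd) (by omega))

theorem tterm_eq {i s : ℕ} (hs : s ∈ S) (his : i ≤ s) (hmin : ∀ t ∈ S, i ≤ t → s ≤ t) :
    tterm a S i = (((a i - i + s : ℤ) : ℝ) : EReal) := by
  rw [tterm, tval_eq hs his hmin, ← EReal.coe_add, EReal.coe_eq_coe_iff]
  push_cast [his]
  ring

theorem tterm_pair_of_le {p q l : ℕ} (hl : l ≤ p) (hpq : p ≤ q) :
    tterm a {p, q} l = (((a l - l + p : ℤ) : ℝ) : EReal) :=
  tterm_eq (Set.mem_insert _ _) hl fun t ht hlt => by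
    rcases ht with rfl | rfl <;> omega

theorem tterm_pair_of_lt {p q l : ℕ} (hpl : p < l) (hlq : l ≤ q) :
    tterm a {p, q} l = (((a l - l + q : ℤ) : ℝ) : EReal) :=
  tterm_eq (Set.mem_insert_of_mem _ rfl) hlq fun t ht hlt => by
    rcases ht with rfl | rfl <;> omega

theorem tterm_singleton_of_le {s l : ℕ} (hl : l ≤ s) :
    tterm a {s} l = (((a l - l + s : ℤ) : ℝ) : EReal) := by
  rw [← Set.pair_eq_singleton]
  exact tterm_pair_of_le hl le_rfl

theorem tterm_singleton_of_lt {s l : ℕ} (h : s < l) : tterm a {s} l = ⊤ := by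
  rw [tterm, tval_eq_top fun t ht => (Set.mem_singleton_iff.1 ht) ▸ h, EReal.coe_add_top]

theorem tterm_eq_tmin_iff {i : ℕ} (hi : i ≤ k) :
    tterm a S i = tmin k a S ↔ IsMinOn (tterm a S) (Set.Iic k) i := by
  have hmem : ∀ l, l ∈ Finset.range (k + 1) ↔ l ≤ k := fun l => Finset.mem_range_succ_iff
  rw [isMinOn_iff]
  constructor
  · intro h l hl
    exact h ▸ iInf₂_le l ((hmem l).2 hl)
  · intro h
    exact le_antisymm (le_iInf₂ fun l hl => h l ((hmem l).1 hl)) (iInf₂_le i ((hmem i).2 hi))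

theorem isSol_iff : IsSol k a S ↔ MinTwiceOn (tterm a S) (Set.Iic k) := by
  have hmem : ∀ l, l ∈ Finset.range (k + 1) ↔ l ∈ Set.Iic k := fun l => Finset.mem_range_succ_iff
  simp only [IsSol, MinTwiceOn, hmem]
  constructor
  · rintro ⟨i, hi, j, hj, hij, hti, htj⟩
    exact ⟨i, hi, j, hj, hij, (tterm_eq_tmin_iff hi).1 hti, (tterm_eq_tmin_iff hj).1 htj⟩
  · rintro ⟨i, hi, j, hj, hij, hmi, hmj⟩
    exact ⟨i, hi, j, hj, hij, (tterm_eq_tmin_iff hi).2 hmi, (tterm_eq_tmin_iff hj).2 hmj⟩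

theorem IsMinSol.not_isSol_of_ssubset {T : Set ℕ} (h : IsMinSol k a S) (hTS : T ⊂ S)
    (hT : T.Nonempty) : ¬ IsSol k a T :=
  fun hsol => hTS.ne (h.2.2 T hTS.subset hT hsol)

theorem strictMono_coe_add (c : ℤ) : StrictMono fun x : ℤ => (((x + c : ℤ) : ℝ) : EReal) :=
  EReal.coe_strictMono.comp (Int.cast_strictMono.comp (add_left_strictMono (a := c)))

theorem IsMinSol.add_inf'_eq_add_inf' {p q : ℕ} (hp : p < k) (hq : k ≤ q)
    (h : IsMinSol k a {p, q}) :
    (q : ℤ) + (Finset.Ioc p k).inf' (Finset.nonempty_Ioc.2 hp) (fun l => a l - l)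
      = p + (Finset.Iic p).inf' Finset.nonempty_Iic (fun l => a l - l) := by
  have hpq : p < q := hp.trans_le hq
  refine MinTwiceOn.add_inf'_eq_add_inf' hp (by exact_mod_cast hpq.le) ?_ ?_ ?_
  · refine (minTwiceOn_comp_iff (strictMono_coe_add 0)).1 ((isSol_iff.1 h.2.1).congr ?_)
    intro l (hl : l ≤ k)
    by_cases hlp : l ≤ p
    · simp [tterm_pair_of_le hlp hpq.le, hlp]
    · simp [tterm_pair_of_lt (not_le.1 hlp) (hl.trans hq), hlp]
  · intro hlow
    refine h.not_isSol_of_ssubset ?_ (Set.singleton_nonempty p) (isSol_iff.2 ?_)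
    · rw [Set.pair_comm]
      exact Set.ssubset_insert (Set.mem_singleton_iff.not.2 hpq.ne')
    · refine MinTwiceOn.of_subset_of_eq_top ?_ (Set.Iic_subset_Iic.2 hp.le) ?_
      · exact ((minTwiceOn_comp_iff (strictMono_coe_add p)).2 hlow).congr
          fun l (hl : l ≤ p) => (tterm_singleton_of_le hl).symm
      · exact fun l hl => tterm_singleton_of_lt (not_le.1 hl.2)
  · intro hall
    refine h.not_isSol_of_ssubset ?_ (Set.singleton_nonempty q) (isSol_iff.2 ?_)
    · exact Set.ssubset_insert (Set.mem_singleton_iff.not.2 hpq.ne)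
    · exact ((minTwiceOn_comp_iff (strictMono_coe_add q)).2 hall).congr
        fun l (hl : l ≤ k) => (tterm_singleton_of_le (hl.trans hq)).symm

end Tropical

theorem stmt2_general (k : ℕ) (a : ℕ → ℤ) (p q₁ q₂ : ℕ)
    (hp : p < k) (hq₁ : k ≤ q₁) (hq₂ : k ≤ q₂)
    (h₁ : IsMinSol k a {p, q₁}) (h₂ : IsMinSol k a {p, q₂}) : q₁ = q₂ := by
  have e₁ := h₁.add_inf'_eq_add_inf' hp hq₁
  have e₂ := h₂.add_inf'_eq_add_inf' hp hq₂
  omega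

/-- uniqueness of the large element of a minimal solution `{p, q}`
with `p < k ≤ q`. -/
theorem stmt2 (k : ℕ) (hk : 1 ≤ k) (a : ℕ → ℤ) (p q₁ q₂ : ℕ)
    (hp : p < k) (hq₁ : k ≤ q₁) (hq₂ : k ≤ q₂)
    (h₁ : IsMinSol k a {p, q₁}) (h₂ : IsMinSol k a {p, q₂}) : q₁ = q₂ :=
  stmt2_general k a p q₁ q₂ hp hq₁ hq₂ h₁ h₂
end

section
/- Any system of m tropical linear differential equations in n unknowns with m < n is non-holonomic: it has infinitely many minimal solutions. -/
/-- The term `a_{i,j} + val_{S_j}(i)` with integer coefficients. -/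
noncomputable def ttermZ (a : ℕ → ℤ) (S : Set ℕ) (i : ℕ) : EReal :=
  ((a i : ℝ) : EReal) + tval S i

/-- `trop_{P}(S) = min_{1 ≤ j ≤ n, 0 ≤ i ≤ k_j} { a_{i,j} + val_{S_j}(i) }`. -/
noncomputable def tminZ (n : ℕ) (k : Fin n → ℕ) (a : Fin n → ℕ → ℤ)
    (S : Fin n → Set ℕ) : EReal :=
  ⨅ j : Fin n, ⨅ i ∈ Finset.range (k j + 1), ttermZ (a j) (S j) i

/-- `S` is a solution of one TLDE in `n` unknowns: the minimum equals `∞` or is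
attained at least twice. -/
def IsSolZ (n : ℕ) (k : Fin n → ℕ) (a : Fin n → ℕ → ℤ)
    (S : Fin n → Set ℕ) : Prop :=
  tminZ n k a S = ⊤ ∨
    ∃ j : Fin n, ∃ i ∈ Finset.range (k j + 1),
      ∃ j' : Fin n, ∃ i' ∈ Finset.range (k j' + 1), (j, i) ≠ (j', i') ∧
        ttermZ (a j) (S j) i = tminZ n k a S ∧
        ttermZ (a j') (S j') i' = tminZ n k a S

/-- `S` is a minimal (nonzero) solution of the system of `m` TLDEs in `n`
unknowns. -/
def IsMinSolSys (n m : ℕ) (k : Fin n → ℕ) (a : Fin m → Fin n → ℕ → ℤ)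
    (S : Fin n → Set ℕ) : Prop :=
  S ≠ (fun _ => (∅ : Set ℕ)) ∧ (∀ l : Fin m, IsSolZ n k (a l) S) ∧
    ∀ T : Fin n → Set ℕ, (∀ j, T j ⊆ S j) → T ≠ (fun _ => (∅ : Set ℕ)) →
      (∀ l : Fin m, IsSolZ n k (a l) T) → T = S

open Finset

def MinAttainedTwice {κ α : Type*} [LE α] (f : κ → α) : Prop :=
  ∃ j j', j ≠ j' ∧ f j = f j' ∧ ∀ i, f j ≤ f i

lemma MinAttainedTwice.add_const {κ α : Type*} [Add α] [LE α] [AddRightMono α] {f : κ → α}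
    (h : MinAttainedTwice f) (t : α) : MinAttainedTwice fun j => f j + t := by
  obtain ⟨j, j', hne, heq, hmin⟩ := h
  exact ⟨j, j', hne, congrArg (· + t) heq, fun i => add_le_add_left (hmin i) t⟩

lemma sum_swap_comp_add {ι κ α : Type*} [Fintype ι] [DecidableEq ι] [DecidableEq κ]
    [AddCommMonoid α] (c : ι → κ → α) (π : ι ↪ κ) (i : ι) (j : κ) (hj : ∀ x, π x ≠ j) :
    ∑ x, c x (Equiv.swap (π i) j (π x)) + c i (π i) = ∑ x, c x (π x) + c i j := by
  have hfix : ∀ x ∈ univ.erase i, c x (Equiv.swap (π i) j (π x)) = c x (π x) := fun x hx =>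
    congrArg (c x) (Equiv.swap_apply_of_ne_of_ne (π.injective.ne (ne_of_mem_erase hx)) (hj x))
  rw [← add_sum_erase _ _ (mem_univ i), ← add_sum_erase _ _ (mem_univ i), sum_congr rfl hfix,
    Equiv.swap_apply_left]
  abel

lemma exists_embedding_forall_ne {ι κ : Type*} [Fintype ι] [Fintype κ] [DecidableEq κ]
    (h : Fintype.card ι < Fintype.card κ) (j : κ) : ∃ π : ι ↪ κ, ∀ x, π x ≠ j := by
  obtain ⟨π⟩ : Nonempty (ι ↪ {y // y ≠ j}) := Function.Embedding.nonempty_of_card_le (by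
    rw [Fintype.card_subtype_compl, Fintype.card_subtype_eq]; omega)
  exact ⟨π.trans (Function.Embedding.subtype _), fun x => (π x).2⟩

/-- Tropical Cramer rule: `q j` is the least weight of a matching of all rows into the
columns other than `j`. -/
theorem exists_forall_minAttainedTwice {ι κ α : Type*} [Fintype ι] [DecidableEq ι] [Fintype κ]
    [DecidableEq κ] [AddCommGroup α] [LinearOrder α] [IsOrderedAddMonoid α] (c : ι → κ → α)
    (h : Fintype.card ι < Fintype.card κ) :
    ∃ q : κ → α, ∀ i, MinAttainedTwice fun j => c i j + q j := by
  let weight (π : ι ↪ κ) : α := ∑ x, c x (π x)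
  let avoiding (j : κ) : Finset (ι ↪ κ) := {π | ∀ x, π x ≠ j}
  have havoiding (j : κ) : (avoiding j).Nonempty := by
    obtain ⟨π, hπ⟩ := exists_embedding_forall_ne h j
    exact ⟨π, mem_filter.2 ⟨mem_univ _, hπ⟩⟩
  let q (j : κ) : α := (avoiding j).inf' (havoiding j) weight
  refine ⟨q, fun i => ?_⟩
  obtain ⟨j₀⟩ : Nonempty κ := Fintype.card_pos_iff.1 (by omega)
  obtain ⟨π₀, hπ₀⟩ := havoiding j₀
  obtain ⟨⟨j, π⟩, hjπ, hmin⟩ :=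
    exists_min_image (univ.filter fun p : κ × (ι ↪ κ) => p.2 ∈ avoiding p.1)
      (fun p => c i p.1 + weight p.2) ⟨(j₀, π₀), mem_filter.2 ⟨mem_univ _, hπ₀⟩⟩
  have hπ : ∀ x, π x ≠ j := (mem_filter.1 (mem_filter.1 hjπ).2).2
  have hle (j' : κ) : c i j + weight π ≤ c i j' + q j' := by
    obtain ⟨π', hπ', hq⟩ := exists_mem_eq_inf' (havoiding j') weight
    change _ ≤ _ + (avoiding j').inf' _ weight
    rw [hq]
    exact hmin ⟨j', π'⟩ (mem_filter.2 ⟨mem_univ _, hπ'⟩)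
  have hqj : c i j + q j = c i j + weight π :=
    le_antisymm (add_le_add_right (inf'_le _ (mem_filter.2 ⟨mem_univ _, hπ⟩)) _) (hle j)
  -- Re-matching row `i` to the free column `j` frees column `π i` at no extra cost.
  let π' : ι ↪ κ := π.trans (Equiv.swap (π i) j).toEmbedding
  have hπ' : π' ∈ avoiding (π i) := mem_filter.2 ⟨mem_univ _, fun x hx => hπ x (by
    simpa [π', Equiv.swap_apply_eq_iff] using hx)⟩
  have hqπi : c i (π i) + q (π i) = c i j + weight π := by
    refine le_antisymm ?_ (hle _)
    calc c i (π i) + q (π i) ≤ c i (π i) + weight π' := add_le_add_right (inf'_le _ hπ') _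
      _ = c i j + weight π := by
        rw [add_comm, add_comm (c i j)]; exact sum_swap_comp_add c π i j hπ
  exact ⟨j, π i, (hπ i).symm, hqj.trans hqπi.symm, fun j' => hqj.trans_le (hle j')⟩

lemma tval_singleton {s i : ℕ} (h : i ≤ s) : tval {s} i = (((s - i : ℕ) : ℝ) : EReal) := by
  refine le_antisymm (iInf₂_le (s - i) (by simp only [Set.mem_singleton_iff]; omega)) ?_
  refine le_iInf₂ fun d hd => ?_
  rw [Set.mem_singleton_iff] at hd
  rw [← hd, Nat.add_sub_cancel_left]

lemma ttermZ_singleton (a : ℕ → ℤ) {s i : ℕ} (h : i ≤ s) :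
    ttermZ a {s} i = (((a i + s - i : ℤ) : ℝ) : EReal) := by
  rw [ttermZ, tval_singleton h, ← EReal.coe_add]
  congr 1
  push_cast [h]
  ring

lemma isSolZ_of_eq_of_le {n : ℕ} {k : Fin n → ℕ} {a : Fin n → ℕ → ℤ} {S : Fin n → Set ℕ}
    {v : EReal} {j j' : Fin n} {i i' : ℕ} (hi : i ∈ Finset.range (k j + 1))
    (hi' : i' ∈ Finset.range (k j' + 1)) (hne : (j, i) ≠ (j', i'))
    (hv : ttermZ (a j) (S j) i = v) (hv' : ttermZ (a j') (S j') i' = v)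
    (hle : ∀ j₂, ∀ i₂ ∈ Finset.range (k j₂ + 1), v ≤ ttermZ (a j₂) (S j₂) i₂) :
    IsSolZ n k a S := by
  have hmin : tminZ n k a S = v :=
    le_antisymm (hv ▸ iInf₂_le_of_le j i (iInf_le_of_le hi le_rfl)) (le_iInf₂ fun j₂ i₂ =>
      le_iInf (hle j₂ i₂))
  exact Or.inr ⟨j, i, hi, j', i', hi', hne, hv.trans hmin.symm, hv'.trans hmin.symm⟩

/-- `min_{i ≤ k} (a i - i)`: for a singleton `S = {s}` with `k ≤ s`, the least of the terms
`a i + val_S(i)`, `i ≤ k`, is this number plus `s`. -/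
def minShifted (k : ℕ) (a : ℕ → ℤ) : ℤ :=
  (Finset.range (k + 1)).inf' Finset.nonempty_range_add_one fun i => a i - i

lemma minShifted_le (a : ℕ → ℤ) {k i : ℕ} (hi : i ≤ k) : minShifted k a ≤ a i - i :=
  Finset.inf'_le _ (Finset.mem_range_succ_iff.2 hi)

lemma exists_minShifted_eq (k : ℕ) (a : ℕ → ℤ) : ∃ i ≤ k, minShifted k a = a i - i := by
  obtain ⟨i, hi, h⟩ := Finset.exists_mem_eq_inf' Finset.nonempty_range_add_one fun i => a i - i
  exact ⟨i, Finset.mem_range_succ_iff.1 hi, h⟩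

lemma isSolZ_singleton {n : ℕ} {k : Fin n → ℕ} {a : Fin n → ℕ → ℤ} {s : Fin n → ℕ}
    (hks : ∀ j, k j ≤ s j) (h : MinAttainedTwice fun j => minShifted (k j) (a j) + s j) :
    IsSolZ n k a fun j => {s j} := by
  obtain ⟨j, j', hne, heq, hmin⟩ := h
  obtain ⟨i, hi, hci⟩ := exists_minShifted_eq (k j) (a j)
  obtain ⟨i', hi', hci'⟩ := exists_minShifted_eq (k j') (a j')
  have hterm {j₂ : Fin n} {i₂ : ℕ} (hi₂ : i₂ ∈ Finset.range (k j₂ + 1)) :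
      ttermZ (a j₂) {s j₂} i₂ = (((a j₂ i₂ + s j₂ - i₂ : ℤ) : ℝ) : EReal) :=
    ttermZ_singleton _ ((Finset.mem_range_succ_iff.1 hi₂).trans (hks j₂))
  have hmem {j₂ : Fin n} {i₂ : ℕ} (hi₂ : i₂ ≤ k j₂) : i₂ ∈ Finset.range (k j₂ + 1) :=
    Finset.mem_range_succ_iff.2 hi₂
  refine isSolZ_of_eq_of_le (hmem hi) (hmem hi') (fun h => hne (congrArg Prod.fst h))
    (hterm (hmem hi)) ((hterm (hmem hi')).trans ?_) fun j₂ i₂ hi₂ => ?_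
  · dsimp only at heq
    congr 2
    omega
  · have h₁ := hmin j₂
    have h₂ := minShifted_le (a j₂) (Finset.mem_range_succ_iff.1 hi₂)
    dsimp only at h₁
    rw [hterm hi₂]
    exact_mod_cast (by omega : a j i + s j - i ≤ a j₂ i₂ + s j₂ - i₂)

lemma exists_le_isMinSolSys {n m : ℕ} {k : Fin n → ℕ} {a : Fin m → Fin n → ℕ → ℤ}
    {S : Fin n → Set ℕ} (hfin : ∀ j, (S j).Finite) (hne : S ≠ fun _ => ∅)
    (hsol : ∀ l, IsSolZ n k (a l) S) : ∃ T ≤ S, IsMinSolSys n m k a T := by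
  let sols : Set (Fin n → Set ℕ) := {T | T ≤ S ∧ T ≠ (fun _ => ∅) ∧ ∀ l, IsSolZ n k (a l) T}
  have hsols : sols.Finite :=
    (Set.Finite.pi fun j => (hfin j).powerset).subset fun T hT j _ => hT.1 j
  obtain ⟨T, hTS, ⟨-, hT, hTsol⟩, hTmin⟩ := hsols.exists_le_minimal ⟨le_rfl, hne, hsol⟩
  exact ⟨T, hTS, hT, hTsol, fun U hUT hU hUsol =>
    le_antisymm hUT (hTmin ⟨le_trans hUT hTS, hU, hUsol⟩ hUT)⟩

lemma exists_nat_forall_minAttainedTwice {ι κ : Type*} [Fintype ι] [DecidableEq ι] [Fintype κ]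
    [DecidableEq κ] (c : ι → κ → ℤ) (h : Fintype.card ι < Fintype.card κ) (k : κ → ℕ) :
    ∃ p : κ → ℕ, (∀ j, k j ≤ p j) ∧ ∀ i, MinAttainedTwice fun j => c i j + p j := by
  obtain ⟨q, hq⟩ := exists_forall_minAttainedTwice c h
  obtain ⟨B, hB⟩ := Finite.exists_le fun j => ((k j : ℤ) - q j).toNat
  have hpq (j : κ) : (((q j + B).toNat : ℕ) : ℤ) = q j + B := by
    have := hB j
    omega
  refine ⟨fun j => (q j + B).toNat, fun j => ?_, fun i => ?_⟩
  · have := hB j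
    dsimp only
    omega
  · simpa only [hpq, add_assoc] using (hq i).add_const (B : ℤ)

theorem stmt16_general (n m : ℕ) (hmn : m < n) (k : Fin n → ℕ)
    (a : Fin m → Fin n → ℕ → ℤ) :
    {S : Fin n → Set ℕ | IsMinSolSys n m k a S}.Infinite := by
  obtain ⟨p, hpk, hp⟩ := exists_nat_forall_minAttainedTwice
    (fun l j => minShifted (k j) (a l j)) (by simpa using hmn) k
  have hsol (b : ℕ) (l : Fin m) : IsSolZ n k (a l) fun j => {p j + b} :=
    isSolZ_singleton (fun j => (hpk j).trans (Nat.le_add_right _ _))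
      (by simpa only [Nat.cast_add, add_assoc] using (hp l).add_const (b : ℤ))
  have hne (b : ℕ) : (fun j : Fin n => ({p j + b} : Set ℕ)) ≠ fun _ => ∅ :=
    fun h => Set.singleton_ne_empty _ (congrFun h ⟨0, by omega⟩)
  choose T hTS hT using fun b => exists_le_isMinSolSys (fun j => Set.finite_singleton _)
    (hne b) (hsol b)
  refine Set.infinite_of_injective_forall_mem (fun b b' hbb' => ?_) hT
  obtain ⟨j, hj⟩ := Function.ne_iff.1 (hT b).1
  obtain ⟨x, hx⟩ := Set.nonempty_iff_ne_empty.2 hj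
  have h₁ : x = p j + b := hTS b j hx
  have h₂ : x = p j + b' := hTS b' j (hbb' ▸ hx)
  omega

/-- any system of `m < n` TLDEs in `n` unknowns has infinitely
many minimal solutions. -/
theorem stmt16 (n m : ℕ) (hmn : m < n) (k : Fin n → ℕ) (hk : ∀ j, 1 ≤ k j)
    (a : Fin m → Fin n → ℕ → ℤ) :
    {S : Fin n → Set ℕ | IsMinSolSys n m k a S}.Infinite :=
  stmt16_general n m hmn k a
end

section
/- For any family of n ≥ 3 permutations w_1,...,w_n ∈ Sym(l), there exists an index j ∈ [n] such that the number of inversions of the family obtained by removing w_j is at most (2/n) times the number of (n−1)-element subsets of [l]; more precisely, each (n−1)-subset {i_1,...,i_{n−1}} of [l] is an inversion of the (n−1)-subfamily {w_1,...,w_n} \ {w_j} for exactly zero or exactly two indices j ∈ [n]. -/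
/-- `m_w(s) = w⁻¹(min w(s))`, as an element of `WithTop (Fin l)` (`⊤` when `s`
is empty). -/
def mW {l : ℕ} (w : Equiv.Perm (Fin l)) (s : Finset (Fin l)) : WithTop (Fin l) :=
  WithTop.map (⇑w.symm) ((s.image ⇑w).min)

/-- `s` is an inversion of the subfamily of `w` obtained by removing index `j`:
the values `m_{w_t}(s)`, `t ≠ j`, are pairwise distinct. -/
def InvWithout {l n : ℕ} (w : Fin n → Equiv.Perm (Fin l)) (j : Fin n)
    (s : Finset (Fin l)) : Prop :=
  Function.Injective (fun t : {t : Fin n // t ≠ j} => mW (w t) s)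

/-!
For an `(n-1)`-set `s`, put `f t = m_{w_t}(s)`. All `n` values of `f` lie in `s`, so by
pigeonhole `f a = f b` for some `a ≠ b`. Injectivity of `f` off `j` then forces `j ∈ {a, b}`,
and, as `f a = f b`, injectivity off `a` and off `b` are equivalent: `s` is an inversion of
either none or exactly two of the subfamilies. Double counting over the `(n-1)`-sets gives a
subfamily with at most `2/n` of them as inversions.
-/

open Finset

namespace Set

variable {ι α : Type*} {f : ι → α} {a b j : ι}

theorem InjOn.mem_pair_of_compl (hj : InjOn f {j}ᶜ) (hab : a ≠ b) (hfab : f a = f b) :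
    j = a ∨ j = b := by
  by_contra! h
  exact hab (hj h.1.symm h.2.symm hfab)

theorem InjOn.compl_singleton_of_eq (ha : InjOn f {a}ᶜ) (hfab : f a = f b) :
    InjOn f {b}ᶜ := by
  grind [InjOn]

theorem ncard_setOf_injOn_compl_eq_zero_or_two [Finite ι] (hab : a ≠ b) (hfab : f a = f b) :
    {j | InjOn f {j}ᶜ}.ncard = 0 ∨ {j | InjOn f {j}ᶜ}.ncard = 2 := by
  by_cases ha : InjOn f {a}ᶜ
  · right
    have : {j | InjOn f {j}ᶜ} = {a, b} := by
      ext j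
      refine ⟨fun hj ↦ hj.mem_pair_of_compl hab hfab, ?_⟩
      rintro (rfl | rfl)
      exacts [ha, ha.compl_singleton_of_eq hfab]
    rw [this, ncard_pair hab]
  · left
    rw [ncard_eq_zero, eq_empty_iff_forall_notMem]
    intro j hj
    rcases InjOn.mem_pair_of_compl hj hab hfab with rfl | rfl
    exacts [ha hj, ha (hj.compl_singleton_of_eq hfab.symm)]

end Set

theorem Finset.exists_card_mul_card_filter_le {ι α : Type*} [Fintype ι] [Nonempty ι]
    (S : Finset α) (r : ι → α → Prop) [∀ i a, Decidable (r i a)] {k : ℕ}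
    (h : ∀ a ∈ S, #{i | r i a} ≤ k) :
    ∃ i, Fintype.card ι * #{a ∈ S | r i a} ≤ k * #S := by
  have hsum : ∑ i, #{a ∈ S | r i a} ≤ k * #S :=
    calc ∑ i, #{a ∈ S | r i a} = ∑ a ∈ S, #{i | r i a} :=
          sum_card_bipartiteAbove_eq_sum_card_bipartiteBelow (r := fun i a ↦ r i a)
      _ ≤ k * #S := by simpa [mul_comm] using sum_le_card_nsmul S _ k h
  obtain ⟨i, -, hi⟩ := exists_le_of_sum_le univ_nonempty
    (f := fun i ↦ Fintype.card ι * #{a ∈ S | r i a}) (g := fun _ ↦ k * #S)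
    (by simpa [← mul_sum] using Nat.mul_le_mul_left (Fintype.card ι) hsum)
  exact ⟨i, hi⟩

theorem exists_mem_mW_eq {l : ℕ} (w : Equiv.Perm (Fin l)) {s : Finset (Fin l)}
    (hs : s.Nonempty) :
    ∃ x ∈ s, mW w s = (x : WithTop (Fin l)) := by
  have him : (s.image ⇑w).Nonempty := hs.image _
  obtain ⟨x, hx, hw⟩ := mem_image.1 (min'_mem _ him)
  refine ⟨x, hx, ?_⟩
  rw [mW, ← coe_min' him, WithTop.map_coe, ← hw, Equiv.symm_apply_apply]

theorem invWithout_iff_injOn {l n : ℕ} (w : Fin n → Equiv.Perm (Fin l)) (j : Fin n)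
    (s : Finset (Fin l)) : InvWithout w j s ↔ Set.InjOn (fun t ↦ mW (w t) s) {j}ᶜ :=
  (Set.injOn_iff_injective (f := fun t ↦ mW (w t) s) (s := {j}ᶜ)).symm

theorem exists_ne_mW_eq {l n : ℕ} (w : Fin n → Equiv.Perm (Fin l)) {s : Finset (Fin l)}
    (hs : s.Nonempty) (hsn : #s < n) : ∃ a b, a ≠ b ∧ mW (w a) s = mW (w b) s := by
  have hmaps : ∀ t ∈ (univ : Finset (Fin n)), mW (w t) s ∈ s.image WithTop.some := by
    intro t _
    obtain ⟨x, hx, hxt⟩ := exists_mem_mW_eq (w t) hs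
    exact mem_image.2 ⟨x, hx, hxt.symm⟩
  obtain ⟨a, -, b, -, hab, h⟩ := exists_ne_map_eq_of_card_lt_of_maps_to
    (by rwa [card_image_of_injective _ WithTop.coe_injective, card_univ, Fintype.card_fin]) hmaps
  exact ⟨a, b, hab, h⟩

theorem ncard_setOf_invWithout_eq_zero_or_two {l n : ℕ} (hn : 2 ≤ n)
    (w : Fin n → Equiv.Perm (Fin l)) {s : Finset (Fin l)} (hs : #s = n - 1) :
    {j | InvWithout w j s}.ncard = 0 ∨ {j | InvWithout w j s}.ncard = 2 := by
  obtain ⟨a, b, hab, h⟩ := exists_ne_mW_eq w (s := s) (card_pos.1 (by omega)) (by omega)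
  simpa only [invWithout_iff_injOn] using Set.ncard_setOf_injOn_compl_eq_zero_or_two hab h

/-- for `n ≥ 3` permutations `w₁,…,wₙ` of `[l]`, some subfamily of
size `n-1` has at most `(2/n)·C(l, n-1)` inversions; more precisely, each
`(n-1)`-subset of `[l]` is an inversion of exactly zero or exactly two of the
`n` subfamilies of size `n-1`. -/
theorem stmt18 (l n : ℕ) (hn : 3 ≤ n) (w : Fin n → Equiv.Perm (Fin l)) :
    (∃ j : Fin n,
      n * {s : Finset (Fin l) | s.card = n - 1 ∧ InvWithout w j s}.ncard
        ≤ 2 * Nat.choose l (n - 1)) ∧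
    ∀ s : Finset (Fin l), s.card = n - 1 →
      {j : Fin n | InvWithout w j s}.ncard = 0 ∨
      {j : Fin n | InvWithout w j s}.ncard = 2 := by
  classical
  have hcount := fun s ↦ ncard_setOf_invWithout_eq_zero_or_two (by omega) w (s := s)
  refine ⟨?_, hcount⟩
  have : Nonempty (Fin n) := ⟨⟨0, by omega⟩⟩
  obtain ⟨j, hj⟩ := exists_card_mul_card_filter_le (powersetCard (n - 1) univ)
    (fun j s ↦ InvWithout w j s) (k := 2) fun s hs ↦ by
      rw [← Set.ncard_coe_finset, coe_filter_univ]
      rcases hcount s (mem_powersetCard_univ.1 hs) with h | h <;> omega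
  rw [Fintype.card_fin, card_powersetCard, card_univ, Fintype.card_fin, ← Set.ncard_coe_finset,
    coe_filter] at hj
  simp only [mem_powersetCard_univ] at hj
  exact ⟨j, hj⟩
end
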